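/- If a function f : ℕ →. ℕ defined by f(m) = least z such that (V z = true ∧ V (Nat.pair (π₁ z) (eval m (π₁ z))) = false) is total, where eval m is the m-th machine in an enumeration covering all functions of the form Q_N (N ∈ ℕ), then for every N there exists m_N with eval m_N = Q_N and f(m_N) ≥ N + 1. -/
import Mathlib

theorem stmt_17 (V : ℕ → Bool) (E : ℕ → ℕ) (eval : ℕ → ℕ → ℕ)
    (hE : ∀ z, (∃ y, V (Nat.pair z y) = true) → V (Nat.pair z (E z)) = true)
    (hsurj : ∀ N, ∃ m, ∀ z, eval m z = if z ≤ N then E z else 0)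
    (f : ℕ → ℕ)
    (hf : ∀ m, (V (f m) = true ∧
        V (Nat.pair (f m).unpair.1 (eval m (f m).unpair.1)) = false) ∧
      ∀ z < f m, ¬ (V z = true ∧ V (Nat.pair z.unpair.1 (eval m z.unpair.1)) = false)) :
    ∀ N, ∃ m, (∀ z, eval m z = if z ≤ N then E z else 0) ∧ f m ≥ N + 1 := by
  intro N
  obtain ⟨m, hm⟩ := hsurj N
  refine ⟨m, hm, ?_⟩
  by_contra h
  push_neg at h
  have hle : f m ≤ N := Nat.lt_succ_iff.mp h
  obtain ⟨⟨h1, h2⟩, _⟩ := hf m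
  have h1' : (f m).unpair.1 ≤ N := le_trans (Nat.unpair_left_le _) hle
  rw [hm, if_pos h1'] at h2
  have : V (Nat.pair (f m).unpair.1 (E (f m).unpair.1)) = true := by
    apply hE
    exact ⟨(f m).unpair.2, by rw [Nat.pair_unpair]; exact h1⟩
  simp [this] at h2
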